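/- Let m ≥ 2 be a fixed real, and define h(t) = m·(t + γ + 1)² / ((t + γ)² + m·(t + γ + 1)) for t ≥ 0 and fixed γ ≥ 0. Then h is nondecreasing in t. -/
import Mathlib

theorem stmt5 (m γ : ℝ) (hm : 2 ≤ m) (hγ : 0 ≤ γ) :
    ∀ t₁ t₂ : ℝ, 0 ≤ t₁ → t₁ ≤ t₂ →
      m * (t₁ + γ + 1) ^ 2 / ((t₁ + γ) ^ 2 + m * (t₁ + γ + 1))
        ≤ m * (t₂ + γ + 1) ^ 2 / ((t₂ + γ) ^ 2 + m * (t₂ + γ + 1)) := by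
  intro t₁ t₂ ht₁ h12
  have hx : 0 ≤ t₁ + γ := by linarith
  have hy : 0 ≤ t₂ + γ := by linarith
  have d1 : 0 < (t₁ + γ) ^ 2 + m * (t₁ + γ + 1) := by nlinarith [sq_nonneg (t₁ + γ)]
  have d2 : 0 < (t₂ + γ) ^ 2 + m * (t₂ + γ + 1) := by nlinarith [sq_nonneg (t₂ + γ)]
  rw [div_le_div_iff₀ d1 d2]
  have key : 0 ≤ (t₂ - t₁) * (m * (t₁ + γ + 1) * (t₂ + γ + 1) - (2 * (t₁+γ) * (t₂+γ) + (t₁+γ) + (t₂+γ))) := by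
    apply mul_nonneg (by linarith)
    nlinarith [mul_nonneg hx hy]
  nlinarith [key, mul_nonneg hx hy, sq_nonneg (t₂ - t₁)]
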